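/- Let G be a graph without parallel edges, T a set of triangles in G, and A1, A2 T-free 2-matchings. Suppose T contains a triangle {u1u2, u2u3, u3u1} with u1u2 ∈ A1 \ A2, u2u3 ∈ A1 ∩ A2, and u3u1 ∈ A2 \ A1, and suppose there exists a vertex u1' with u1'u2 ∈ A2 \ A1 and u3u1' ∈ A1 \ A2. Then the closed trail P1 = u1u2, u2u1', u1'u3, u3u1 is an alternating trail with respect to (A1, A2), and both A1 △ P1 and A2 △ P1 are T-free 2-matchings. -/

import Mathlib

open Finset

variable {V : Type*} [DecidableEq V]

/-- Degree of `v` in the edge set `F`; self-loops count twice. -/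
def degE (F : Finset (Sym2 V)) (v : V) : ℕ :=
  ∑ e ∈ F, (if e = s(v, v) then 2 else if v ∈ e then 1 else 0)

/-- `M` is a 2-matching in the graph with edge set `E`. -/
def IsTwoMatching (E M : Finset (Sym2 V)) : Prop :=
  M ⊆ E ∧ ∀ v : V, degE M v ≤ 2

/-- An edge set forming a cycle of length 3. -/
def IsTriangle (T : Finset (Sym2 V)) : Prop :=
  ∃ a b c : V, a ≠ b ∧ b ≠ c ∧ a ≠ c ∧ T = {s(a, b), s(b, c), s(c, a)}

def TriangleFree (M : Finset (Sym2 V)) : Prop :=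
  ∀ T : Finset (Sym2 V), IsTriangle T → ¬ T ⊆ M

/-- `𝒯`-freeness: `M` contains no triangle of the list `𝒯`. -/
def TFree (𝒯 : Set (Finset (Sym2 V))) (M : Finset (Sym2 V)) : Prop :=
  ∀ T ∈ 𝒯, ¬ T ⊆ M

/-- Symmetric difference of edge sets. -/
def symmDiffE (A B : Finset (Sym2 V)) : Finset (Sym2 V) := (A \ B) ∪ (B \ A)

/-- The list of consecutive edges of the vertex sequence `vs`. -/
def trailEdges (vs : List V) : List (Sym2 V) :=
  List.zipWith (fun a b => s(a, b)) vs vs.tail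

/-- The edge set of the vertex sequence `vs`. -/
def edgesOf (vs : List V) : Finset (Sym2 V) := (trailEdges vs).toFinset

/-- `vs` is a trail (a sequence of distinct consecutive edges) in edge set `E`. -/
def IsTrailIn (E : Finset (Sym2 V)) (vs : List V) : Prop :=
  (trailEdges vs).Nodup ∧ ∀ e ∈ trailEdges vs, e ∈ E

/-- `vs` is a trail alternately traversing edges of `A1 \ A2` and `A2 \ A1`. -/
def IsAltTrail (A1 A2 : Finset (Sym2 V)) (vs : List V) : Prop :=
  (trailEdges vs).Nodup ∧
  (∀ e ∈ trailEdges vs, (e ∈ A1 ∧ e ∉ A2) ∨ (e ∈ A2 ∧ e ∉ A1)) ∧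
  (trailEdges vs).Chain' (fun e f => e ∈ A1 ↔ f ∈ A2)

/-- `Ps` is a partition of `A1 △ A2` into (nonempty) alternating trails w.r.t. `(A1, A2)`. -/
def IsAltTrailPartition (A1 A2 : Finset (Sym2 V)) (Ps : Finset (List V)) : Prop :=
  (∀ p ∈ Ps, IsAltTrail A1 A2 p ∧ trailEdges p ≠ []) ∧
  (∀ p ∈ Ps, ∀ q ∈ Ps, p ≠ q → Disjoint (edgesOf p) (edgesOf q)) ∧
  Ps.biUnion edgesOf = symmDiffE A1 A2

/-
Switching along the 4-cycle `u1 u2 u1' u3` trades its perfect matching `{u1u2, u1'u3}` for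
`{u2u1', u3u1}`; both cover each of the four vertices once, so all degrees are preserved.
The chord `u2u3` lies in `A1 ∩ A2` and survives the switch, so each switched set contains
exactly two edges of each of the triangles `u1u2u3` and `u1'u2u3`. At the middle vertex of
such a pair both slots of the 2-matching are taken, so a triangle through one of these
edges would have to be that triangle itself, which is not contained. Hence every triangle
of the switched set avoids the new edges and already lies in `A1` (resp. `A2`).
-/

lemma degE_mono {M N : Finset (Sym2 V)} (h : M ⊆ N) (v : V) : degE M v ≤ degE N v :=
  sum_le_sum_of_subset h

lemma degE_union_of_disjoint {M N : Finset (Sym2 V)} (h : Disjoint M N) (v : V) :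
    degE (M ∪ N) v = degE M v + degE N v :=
  sum_union h

lemma degE_sdiff_add {M S : Finset (Sym2 V)} (h : S ⊆ M) (v : V) :
    degE (M \ S) v + degE S v = degE M v :=
  sum_sdiff h

lemma card_le_degE {M : Finset (Sym2 V)} {p : V} {N : Finset V} (hp : p ∉ N)
    (hN : ∀ q ∈ N, s(p, q) ∈ M) : #N ≤ degE M p := by
  have hsub : N.image (fun q => s(p, q)) ⊆ M := by
    simpa [image_subset_iff] using hN
  calc #N = degE (N.image (fun q => s(p, q))) p := by
        rw [degE, sum_image (fun q _ r _ h => Sym2.congr_right.1 h), card_eq_sum_ones]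
        refine sum_congr rfl fun q hq => ?_
        have : q ≠ p := fun h => hp (h ▸ hq)
        simp [this]
    _ ≤ degE M p := degE_mono hsub p

lemma loop_notMem_of_degE_le_two {M : Finset (Sym2 V)} {p q : V} (hM : degE M p ≤ 2)
    (hq : q ≠ p) (hpq : s(p, q) ∈ M) : s(p, p) ∉ M := by
  intro hpp
  have hne : s(p, p) ≠ s(p, q) := fun h => hq (Sym2.congr_right.1 h).symm
  have h3 : degE {s(p, p), s(p, q)} p = 3 := by
    simp [degE, sum_pair hne, hq]
  have := degE_mono (insert_subset hpp (singleton_subset_iff.2 hpq)) p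
  omega

lemma eq_of_degE_le_two {M : Finset (Sym2 V)} {p q r x : V} (hM : degE M p ≤ 2)
    (hq : q ≠ p) (hr : r ≠ p) (hx : x ≠ p) (hqr : q ≠ r) (hqx : q ≠ x)
    (hpq : s(p, q) ∈ M) (hpr : s(p, r) ∈ M) (hpx : s(p, x) ∈ M) : x = r := by
  by_contra hxr
  have h3 : #{q, r, x} = 3 := card_eq_three.2 ⟨q, r, x, hqr, hqx, Ne.symm hxr, rfl⟩
  have := card_le_degE (M := M) (p := p) (N := {q, r, x}) (by simp [hq.symm, hr.symm, hx.symm])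
    (by simp [hpq, hpr, hpx])
  omega

lemma IsTriangle.ne_of_mem {T : Finset (Sym2 V)} (h : IsTriangle T) {p q : V}
    (hpq : s(p, q) ∈ T) : p ≠ q := by
  obtain ⟨a, b, c, hab, hbc, hac, rfl⟩ := h
  simp only [mem_insert, mem_singleton, Sym2.eq_iff] at hpq
  grind

lemma IsTriangle.exists_third {T : Finset (Sym2 V)} (h : IsTriangle T) {p q : V}
    (hpq : s(p, q) ∈ T) : ∃ x, x ≠ p ∧ x ≠ q ∧ s(q, x) ∈ T ∧ s(x, p) ∈ T := by
  obtain ⟨a, b, c, hab, hbc, hac, rfl⟩ := h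
  simp only [mem_insert, mem_singleton, Sym2.eq_iff] at hpq
  rcases hpq with (⟨rfl, rfl⟩ | ⟨rfl, rfl⟩) | (⟨rfl, rfl⟩ | ⟨rfl, rfl⟩) |
    (⟨rfl, rfl⟩ | ⟨rfl, rfl⟩)
  · exact ⟨c, Ne.symm hac, Ne.symm hbc, by simp, by simp⟩
  · exact ⟨c, Ne.symm hbc, Ne.symm hac, by simp [Sym2.eq_swap], by simp [Sym2.eq_swap]⟩
  · exact ⟨a, hab, hac, by simp, by simp⟩
  · exact ⟨a, hac, hab, by simp [Sym2.eq_swap], by simp [Sym2.eq_swap]⟩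
  · exact ⟨b, hbc, Ne.symm hab, by simp, by simp⟩
  · exact ⟨b, Ne.symm hab, hbc, by simp [Sym2.eq_swap], by simp [Sym2.eq_swap]⟩

lemma IsTriangle.notMem_of_subset {M T : Finset (Sym2 V)} (hT : IsTriangle T) (hTM : T ⊆ M)
    (hM : ∀ v, degE M v ≤ 2) {a b c : V} (hac : a ≠ c) (hbc : s(b, c) ∈ M)
    (hca : s(c, a) ∉ M) : s(a, b) ∉ T := by
  intro hab
  have hba : s(b, a) ∈ M := Sym2.eq_swap ▸ hTM hab
  have hcb : c ≠ b := by rintro rfl; exact hca hba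
  obtain ⟨x, hxa, hxb, hbx, hxa'⟩ := hT.exists_third hab
  have hxc : x = c := eq_of_degE_le_two (hM b) (hT.ne_of_mem hab) hcb hxb hac hxa.symm
    hba hbc (hTM hbx)
  exact hca (hxc ▸ hTM hxa')

lemma degE_matchings_cycle4 {a b c d : V} (hnd : [a, b, c, d].Nodup) (v : V) :
    degE {s(a, b), s(c, d)} v = degE {s(b, c), s(d, a)} v := by
  simp only [List.nodup_cons, List.mem_cons, List.not_mem_nil] at hnd
  have h1 : s(a, b) ≠ s(c, d) := by simp only [ne_eq, Sym2.eq_iff]; tauto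
  have h2 : s(b, c) ≠ s(d, a) := by simp only [ne_eq, Sym2.eq_iff]; tauto
  simp only [degE, sum_pair h1, sum_pair h2]
  by_cases ha : v = a <;> by_cases hb : v = b <;> by_cases hc : v = c <;> by_cases hd : v = d <;>
    simp_all [eq_comm]

lemma symmDiffE_union_eq {M S N : Finset (Sym2 V)} (hS : S ⊆ M) (hN : Disjoint N M) :
    symmDiffE M (S ∪ N) = M \ S ∪ N := by
  ext e
  have hSM : e ∈ S → e ∈ M := @hS e
  have hNM : e ∈ N → e ∉ M := fun h => Finset.disjoint_left.1 hN h
  simp only [symmDiffE, mem_union, mem_sdiff]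
  tauto

lemma IsTwoMatching.sdiff_union {E M S N : Finset (Sym2 V)} (hM : IsTwoMatching E M)
    (hS : S ⊆ M) (hN : Disjoint N M) (hNE : N ⊆ E) (hdeg : ∀ v, degE S v = degE N v) :
    IsTwoMatching E (M \ S ∪ N) := by
  refine ⟨union_subset (sdiff_subset.trans hM.1) hNE, fun v => ?_⟩
  rw [degE_union_of_disjoint (disjoint_of_subset_left sdiff_subset hN.symm), ← hdeg,
    degE_sdiff_add hS]
  exact hM.2 v

lemma edgesOf_cycle4 (a b c d : V) :
    edgesOf [a, b, c, d, a] = {s(a, b), s(c, d)} ∪ {s(b, c), s(d, a)} := by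
  ext e
  simp only [edgesOf, trailEdges, List.tail_cons, List.zipWith_cons_cons, List.zipWith_nil_right,
    List.mem_toFinset, List.mem_cons, List.not_mem_nil, mem_union, mem_insert, mem_singleton]
  tauto

lemma edgesOf_cycle4_swap (a b c d : V) : edgesOf [a, b, c, d, a] = edgesOf [c, b, a, d, c] := by
  simp only [edgesOf_cycle4, Sym2.eq_swap (a := b), Sym2.eq_swap (a := d)]
  ext e
  simp only [mem_union, mem_insert, mem_singleton]
  tauto

lemma isAltTrail_cycle4 {α : Type*} {A1 A2 : Finset (Sym2 α)} {a b c d : α}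
    (hnd : [a, b, c, d].Nodup)
    (hab : s(a, b) ∈ A1 ∧ s(a, b) ∉ A2) (hbc : s(b, c) ∈ A2 ∧ s(b, c) ∉ A1)
    (hcd : s(c, d) ∈ A1 ∧ s(c, d) ∉ A2) (hda : s(d, a) ∈ A2 ∧ s(d, a) ∉ A1) :
    IsAltTrail A1 A2 [a, b, c, d, a] := by
  simp only [List.nodup_cons, List.mem_cons, List.not_mem_nil] at hnd
  refine ⟨?_, ?_, ?_⟩
  · simp only [trailEdges, List.tail_cons, List.zipWith_cons_cons, List.zipWith_nil_right,
      List.nodup_cons, List.mem_cons, List.not_mem_nil, List.nodup_nil, Sym2.eq_iff]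
    tauto
  · simp only [trailEdges, List.tail_cons, List.zipWith_cons_cons, List.zipWith_nil_right,
      List.mem_cons, List.not_mem_nil]
    rintro e (rfl | rfl | rfl | rfl | h)
    exacts [.inl hab, .inr hbc, .inl hcd, .inr hda, h.elim]
  · exact .cons_cons (iff_of_true hab.1 hbc.1) <| .cons_cons (iff_of_false hbc.2 hcd.2) <|
      .cons_cons (iff_of_true hcd.1 hda.1) <| .singleton _

lemma IsTwoMatching.symmDiffE_chorded_cycle4 {E M : Finset (Sym2 V)}
    {𝒯 : Set (Finset (Sym2 V))} (h𝒯 : ∀ T ∈ 𝒯, IsTriangle T)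
    (hM : IsTwoMatching E M) (hMt : TFree 𝒯 M)
    {a b c d : V} (hnd : [a, b, c, d].Nodup)
    (hab : s(a, b) ∈ M) (hcd : s(c, d) ∈ M) (hbd : s(b, d) ∈ M)
    (hbc : s(b, c) ∉ M) (hda : s(d, a) ∉ M) (hbcE : s(b, c) ∈ E) (hdaE : s(d, a) ∈ E) :
    IsTwoMatching E (symmDiffE M (edgesOf [a, b, c, d, a])) ∧
      TFree 𝒯 (symmDiffE M (edgesOf [a, b, c, d, a])) := by
  have hS : {s(a, b), s(c, d)} ⊆ M := by simp [insert_subset_iff, hab, hcd]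
  have hN : Disjoint {s(b, c), s(d, a)} M := by simp [hbc, hda]
  rw [edgesOf_cycle4, symmDiffE_union_eq hS hN]
  have hM' := hM.sdiff_union hS hN (by simp [insert_subset_iff, hbcE, hdaE])
    (degE_matchings_cycle4 hnd)
  set M' := M \ {s(a, b), s(c, d)} ∪ {s(b, c), s(d, a)} with hM'_def
  refine ⟨hM', fun T hT hTM => hMt T hT fun e he => ?_⟩
  obtain ⟨⟨hab', hac, had⟩, ⟨hbc', hbd'⟩, hcd'⟩ :
      (a ≠ b ∧ a ≠ c ∧ a ≠ d) ∧ (b ≠ c ∧ b ≠ d) ∧ c ≠ d := by simpa using hnd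
  have hdb : s(d, b) ∈ M' := by
    grind [Sym2.eq_iff]
  have hba : s(b, a) ∉ M' := by
    grind [Sym2.eq_iff]
  have hdc : s(d, c) ∉ M' := by
    grind [Sym2.eq_iff]
  have had : s(a, d) ∉ T := (h𝒯 T hT).notMem_of_subset hTM hM'.2 hab' hdb hba
  have hcb : s(c, b) ∉ T :=
    (h𝒯 T hT).notMem_of_subset hTM hM'.2 hcd' (Sym2.eq_swap (a := d) ▸ hdb) hdc
  rcases mem_union.1 (hTM he) with h | h
  · exact (mem_sdiff.1 h).1
  · rw [mem_insert, mem_singleton] at h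
    rcases h with rfl | rfl
    · exact absurd (Sym2.eq_swap ▸ he) hcb
    · exact absurd (Sym2.eq_swap ▸ he) had

/-- Case 2-(1) of the induction: the closed trail
`u1u2, u2u1', u1'u3, u3u1` is alternating and switching along it preserves
`𝒯`-free 2-matchings. -/
theorem stmt_11 (E : Finset (Sym2 V))
    (𝒯 : Set (Finset (Sym2 V))) (h𝒯 : ∀ T ∈ 𝒯, IsTriangle T ∧ T ⊆ E)
    (A1 A2 : Finset (Sym2 V))
    (h1 : IsTwoMatching E A1) (h1t : TFree 𝒯 A1)
    (h2 : IsTwoMatching E A2) (h2t : TFree 𝒯 A2)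
    (u1 u2 u3 u1' : V)
    (hT : ({s(u1, u2), s(u2, u3), s(u3, u1)} : Finset (Sym2 V)) ∈ 𝒯)
    (h12 : s(u1, u2) ∈ A1 ∧ s(u1, u2) ∉ A2)
    (h23 : s(u2, u3) ∈ A1 ∧ s(u2, u3) ∈ A2)
    (h31 : s(u3, u1) ∈ A2 ∧ s(u3, u1) ∉ A1)
    (h1'2 : s(u1', u2) ∈ A2 ∧ s(u1', u2) ∉ A1)
    (h31' : s(u3, u1') ∈ A1 ∧ s(u3, u1') ∉ A2) :
    IsAltTrail A1 A2 [u1, u2, u1', u3, u1] ∧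
    (IsTwoMatching E (symmDiffE A1 (edgesOf [u1, u2, u1', u3, u1])) ∧
      TFree 𝒯 (symmDiffE A1 (edgesOf [u1, u2, u1', u3, u1]))) ∧
    (IsTwoMatching E (symmDiffE A2 (edgesOf [u1, u2, u1', u3, u1])) ∧
      TFree 𝒯 (symmDiffE A2 (edgesOf [u1, u2, u1', u3, u1]))) := by
  have h𝒯' T (hT : T ∈ 𝒯) : IsTriangle T := (h𝒯 T hT).1
  have htri := h𝒯' _ hT
  have hu12 : u1 ≠ u2 := htri.ne_of_mem (by simp)
  have hu23 : u2 ≠ u3 := htri.ne_of_mem (by simp)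
  have hu31 : u3 ≠ u1 := htri.ne_of_mem (by simp)
  have hu11' : u1 ≠ u1' := by rintro rfl; exact h1'2.2 h12.1
  have hu21' : u2 ≠ u1' := by
    rintro rfl; exact loop_notMem_of_degE_le_two (h2.2 u2) hu23.symm h23.2 h1'2.1
  have hu31' : u3 ≠ u1' := by
    rintro rfl; exact loop_notMem_of_degE_le_two (h1.2 u3) hu23 (Sym2.eq_swap ▸ h23.1) h31'.1
  have hnd : [u1, u2, u1', u3].Nodup := by simp [hu12, hu11', hu21', hu23, hu31.symm, hu31'.symm]
  have hnd' : [u1', u2, u1, u3].Nodup := by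
    simp [hu12.symm, hu11'.symm, hu21'.symm, hu23, hu31.symm, hu31'.symm]
  have h21' : s(u2, u1') ∈ A2 ∧ s(u2, u1') ∉ A1 := by rwa [Sym2.eq_swap]
  have h1'3 : s(u1', u3) ∈ A1 ∧ s(u1', u3) ∉ A2 := by rwa [Sym2.eq_swap]
  refine ⟨isAltTrail_cycle4 hnd h12 h21' h1'3 h31,
    h1.symmDiffE_chorded_cycle4 h𝒯' h1t hnd h12.1 h1'3.1 h23.1 h21'.2 h31.2 (h2.1 h21'.1)
      (h2.1 h31.1), ?_⟩
  -- For `A2` the same cycle is read from `u1'`, exchanging the roles of `u1` and `u1'`.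
  rw [edgesOf_cycle4_swap]
  rw [Sym2.eq_swap] at h12 h31
  exact h2.symmDiffE_chorded_cycle4 h𝒯' h2t hnd' h1'2.1 h31.1 h23.2 h12.2 h31'.2 (h1.1 h12.1)
    (h1.1 h31'.1)
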